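/- Let R : ℕ → ℕ satisfy R(n+1) ≤ (n+1)·(R(n) − 1) + 2 for all n ≥ 2. Let k ≥ 2 be an integer and a a natural number with a ≤ ⌊k!·e⌋ − R(k) + 1, and set q = a/k!. Then R(n) ≤ n!·(e−q) + 1 for all n ≥ k. -/

import Mathlib

open Finset

private def A (n : ℕ) : ℕ := ∑ i ∈ range (n+1), n.factorial / i.factorial

private lemma cast_A (n : ℕ) :
    (A n : ℝ) = ∑ i ∈ range (n+1), (n.factorial : ℝ) / i.factorial := by
  rw [A, Nat.cast_sum]
  refine Finset.sum_congr rfl fun i hi => ?_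
  rw [Nat.cast_div (Nat.factorial_dvd_factorial (Nat.lt_succ_iff.mp (mem_range.mp hi)))
    (by positivity)]

private lemma A_succ (n : ℕ) : A (n+1) = (n+1) * A n + 1 := by
  rw [A, A, Finset.sum_range_succ (n := n+1), Nat.div_self (Nat.factorial_pos _),
    Finset.mul_sum]
  congr 1
  refine Finset.sum_congr rfl fun i hi => ?_
  rw [Nat.factorial_succ,
    Nat.mul_div_assoc _ (Nat.factorial_dvd_factorial (Nat.lt_succ_iff.mp (mem_range.mp hi)))]

private lemma floor_eq_A (n : ℕ) (hn : 1 ≤ n) :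
    ⌊(n.factorial : ℝ) * Real.exp 1⌋ = (A n : ℤ) := by
  have hS : ∑ i ∈ range (n+1), (1:ℝ)^i / i.factorial ≤ Real.exp 1 :=
    Real.sum_le_exp_of_nonneg zero_le_one _
  have hS' : (A n : ℝ) ≤ (n.factorial : ℝ) * Real.exp 1 := by
    rw [cast_A]
    calc ∑ i ∈ range (n+1), (n.factorial : ℝ) / i.factorial
        = (n.factorial : ℝ) * ∑ i ∈ range (n+1), (1:ℝ)^i / i.factorial := by
          rw [Finset.mul_sum]; exact Finset.sum_congr rfl fun i _ => by ring
      _ ≤ _ := by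
          have : (0:ℝ) ≤ n.factorial := by positivity
          nlinarith [hS]
  have hb := Real.exp_bound (x := 1) (by norm_num) (n := n+1) (Nat.succ_pos n)
  have hb' : Real.exp 1 - ∑ i ∈ range (n+1), (1:ℝ)^i / i.factorial
      ≤ ((n:ℝ)+1+1) / ((n+1).factorial * ((n:ℝ)+1)) := by
    have := (abs_sub_le_iff.mp hb).1
    simpa using this
  have hupper : (n.factorial : ℝ) * Real.exp 1 < (A n : ℝ) + 1 := by
    have hfa : ((n+1).factorial : ℝ) = (n+1) * n.factorial := by
      rw [Nat.factorial_succ]; push_cast; ring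
    have hpos : (0:ℝ) < n.factorial := by positivity
    have h1 : (n.factorial : ℝ) * Real.exp 1 - (A n : ℝ)
        ≤ (n.factorial : ℝ) * (((n:ℝ)+1+1) / ((n+1).factorial * ((n:ℝ)+1))) := by
      rw [cast_A]
      have : (n.factorial : ℝ) * Real.exp 1 - ∑ i ∈ range (n+1), (n.factorial:ℝ) / i.factorial
          = (n.factorial : ℝ) * (Real.exp 1 - ∑ i ∈ range (n+1), (1:ℝ)^i / i.factorial) := by
        rw [mul_sub, Finset.mul_sum]
        congr 1
        exact Finset.sum_congr rfl fun i _ => by ring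
      rw [this]
      exact mul_le_mul_of_nonneg_left hb' hpos.le
    have h2 : (n.factorial : ℝ) * (((n:ℝ)+1+1) / ((n+1).factorial * ((n:ℝ)+1))) < 1 := by
      rw [hfa, ← mul_div_assoc, div_lt_one (by positivity)]
      have hn' : (1:ℝ) ≤ n := by exact_mod_cast hn
      nlinarith [hpos]
    linarith
  rw [Int.floor_eq_iff]
  constructor
  · exact_mod_cast hS'
  · push_cast; exact hupper

theorem adaptive_bound_a (R : ℕ → ℕ)
    (hR : ∀ n : ℕ, 2 ≤ n → (R (n + 1) : ℤ) ≤ (n + 1) * ((R n : ℤ) - 1) + 2)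
    (k : ℕ) (hk : 2 ≤ k) (a : ℕ)
    (ha : (a : ℤ) ≤ ⌊(k.factorial : ℝ) * Real.exp 1⌋ - R k + 1)
    (q : ℚ) (hq : q = (a : ℚ) / (k.factorial : ℚ)) :
    ∀ n : ℕ, k ≤ n → (R n : ℝ) ≤ (n.factorial : ℝ) * (Real.exp 1 - (q : ℝ)) + 1 := by
  -- integer-level claim
  have key : ∀ n : ℕ, k ≤ n →
      (R n : ℤ) ≤ ⌊(n.factorial : ℝ) * Real.exp 1⌋ - (n.factorial / k.factorial : ℕ) * a + 1 := by
    intro n hn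
    induction n, hn using Nat.le_induction with
    | base =>
        rw [Nat.div_self (Nat.factorial_pos k)]
        push_cast
        linarith [ha]
    | succ n hn ih =>
        have hdvd : k.factorial ∣ n.factorial := Nat.factorial_dvd_factorial hn
        have hc : ((n+1).factorial / k.factorial : ℕ) = (n+1) * (n.factorial / k.factorial) := by
          rw [Nat.factorial_succ, Nat.mul_div_assoc _ hdvd]
        have hfloor : ⌊((n+1).factorial : ℝ) * Real.exp 1⌋
            = (n+1) * ⌊(n.factorial : ℝ) * Real.exp 1⌋ + 1 := by
          rw [floor_eq_A n (by omega), floor_eq_A (n+1) (by omega), A_succ]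
          push_cast; ring
        have h1 := hR n (le_trans hk hn)
        have h2 : (R n : ℤ) - 1 ≤ ⌊(n.factorial : ℝ) * Real.exp 1⌋
            - (n.factorial / k.factorial : ℕ) * a := by linarith
        calc (R (n+1) : ℤ) ≤ (n + 1) * ((R n : ℤ) - 1) + 2 := h1
          _ ≤ (n + 1) * (⌊(n.factorial : ℝ) * Real.exp 1⌋
              - (n.factorial / k.factorial : ℕ) * a) + 2 := by
                have : (0:ℤ) ≤ (n:ℤ) + 1 := by positivity
                exact add_le_add_left (mul_le_mul_of_nonneg_left h2 this) 2
          _ = ⌊((n+1).factorial : ℝ) * Real.exp 1⌋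
              - ((n+1).factorial / k.factorial : ℕ) * a + 1 := by
                rw [hfloor, hc]; push_cast; ring
  intro n hn
  have h := key n hn
  have hdvd : k.factorial ∣ n.factorial := Nat.factorial_dvd_factorial hn
  have hm : ((n.factorial / k.factorial * a : ℕ) : ℝ) = (n.factorial : ℝ) * (q : ℝ) := by
    rw [hq]
    push_cast
    rw [Nat.cast_div hdvd (by positivity)]
    field_simp
  have h' : (R n : ℤ) ≤ ⌊(n.factorial : ℝ) * Real.exp 1⌋ - (n.factorial / k.factorial * a : ℕ) + 1 := by
    push_cast
    push_cast at h
    linarith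
  have hle : ((R n : ℤ) : ℝ) ≤ ((⌊(n.factorial : ℝ) * Real.exp 1⌋
      - (n.factorial / k.factorial * a : ℕ) + 1 : ℤ) : ℝ) := Int.cast_le.mpr h'
  have hf : (⌊(n.factorial : ℝ) * Real.exp 1⌋ : ℝ) ≤ (n.factorial : ℝ) * Real.exp 1 :=
    Int.floor_le _
  rw [Int.cast_add, Int.cast_sub, Int.cast_natCast, Int.cast_natCast, hm, Int.cast_one] at hle
  have : (R n : ℝ) ≤ (n.factorial : ℝ) * Real.exp 1 - (n.factorial : ℝ) * (q:ℝ) + 1 := by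
    push_cast at hle
    linarith
  linarith [this, mul_sub (n.factorial : ℝ) (Real.exp 1) (q:ℝ)]
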